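/- Suppose G is contractible to C_4 via witness structure {W0,W1,W2,W3}, and d1, d2, d3 are three distinct pairwise non-adjacent vertices each with neighborhood exactly {u,v} in G. Then no d_k forms a singleton witness set. -/

import Mathlib

/-!
If `W i = {a}` with `N(a) = {u, v}`, then `a` needs a neighbour in each of `W (i + 1)` and
`W (i - 1)`, so `u` and `v` lie in these two parts, one in each. Any other vertex `b` with
`N(b) = {u, v}` sees both parts, which are not adjacent in `C₄`, so `b` lies in the part
`W (i + 2)` opposite to `a`. Two such vertices `b ≠ c` in the connected set `W (i + 2)` force `b`
to have a neighbour inside `W (i + 2)`, but both neighbours of `b` lie outside it.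
-/

def IsC4Witness {V : Type*} (G : SimpleGraph V) (W : ZMod 4 → Set V) : Prop :=
  (∀ v : V, ∃! i, v ∈ W i) ∧
  (∀ i, (W i).Nonempty) ∧
  (∀ i, (G.induce (W i)).Connected) ∧
  (∀ i j, i ≠ j →
    ((∃ u ∈ W i, ∃ v ∈ W j, G.Adj u v) ↔ (j = i + 1 ∨ j = i - 1)))

namespace SimpleGraph

variable {V : Type*} {G : SimpleGraph V}

theorem adj_iff_of_neighborSet_eq_pair {a u v y : V} (hN : G.neighborSet a = {u, v}) :
    G.Adj a y ↔ y = u ∨ y = v := by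
  rw [← mem_neighborSet, hN, Set.mem_insert_iff, Set.mem_singleton_iff]

end SimpleGraph

namespace IsC4Witness

open SimpleGraph

variable {V : Type*} {G : SimpleGraph V} {W : ZMod 4 → Set V}

theorem eq_of_mem (hW : IsC4Witness G W) {x : V} {j k : ZMod 4} (hj : x ∈ W j)
    (hk : x ∈ W k) : j = k :=
  (hW.1 x).unique hj hk

theorem exists_adj_add_one (hW : IsC4Witness G W) (i : ZMod 4) :
    ∃ x ∈ W i, ∃ y ∈ W (i + 1), G.Adj x y :=
  (hW.2.2.2 i (i + 1) ((by decide : ∀ j : ZMod 4, j ≠ j + 1) i)).2 (Or.inl rfl)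

theorem exists_adj_sub_one (hW : IsC4Witness G W) (i : ZMod 4) :
    ∃ x ∈ W i, ∃ y ∈ W (i - 1), G.Adj x y :=
  (hW.2.2.2 i (i - 1) ((by decide : ∀ j : ZMod 4, j ≠ j - 1) i)).2 (Or.inr rfl)

theorem not_adj_of_mem_add_two (hW : IsC4Witness G W) {i : ZMod 4} {x y : V} (hx : x ∈ W i)
    (hy : y ∈ W (i + 2)) : ¬ G.Adj x y := fun hxy =>
  (by decide : ∀ j : ZMod 4, ¬(j + 2 = j + 1 ∨ j + 2 = j - 1)) i
    ((hW.2.2.2 i (i + 2) ((by decide : ∀ j : ZMod 4, j ≠ j + 2) i)).1 ⟨x, hx, y, hy, hxy⟩)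

theorem exists_adj_mem_of_mem_of_ne (hW : IsC4Witness G W) {i : ZMod 4} {b c : V}
    (hb : b ∈ W i) (hc : c ∈ W i) (hbc : b ≠ c) : ∃ w ∈ W i, G.Adj b w := by
  obtain ⟨w, hw⟩ := ((hW.2.2.1 i).preconnected ⟨b, hb⟩ ⟨c, hc⟩).nonempty_neighborSet_left
    (by simpa using hbc)
  exact ⟨w, w.2, hw⟩

variable {a u v : V} {i : ZMod 4}

theorem mem_add_one_sub_one_of_eq_singleton (hW : IsC4Witness G W) (hWi : W i = {a})
    (hN : G.neighborSet a = {u, v}) :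
    (u ∈ W (i + 1) ∧ v ∈ W (i - 1)) ∨ (v ∈ W (i + 1) ∧ u ∈ W (i - 1)) := by
  obtain ⟨x, hx, y, hy, hxy⟩ := hW.exists_adj_add_one i
  obtain ⟨x', hx', z, hz, hx'z⟩ := hW.exists_adj_sub_one i
  rw [hWi, Set.mem_singleton_iff] at hx hx'
  subst hx hx'
  have hyz : y ≠ z := fun h =>
    (by decide : ∀ j : ZMod 4, j + 1 ≠ j - 1) i (hW.eq_of_mem hy (h ▸ hz))
  rw [adj_iff_of_neighborSet_eq_pair hN] at hxy hx'z
  rcases hxy with rfl | rfl <;> rcases hx'z with rfl | rfl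
  · exact absurd rfl hyz
  · exact Or.inl ⟨hy, hz⟩
  · exact Or.inr ⟨hy, hz⟩
  · exact absurd rfl hyz

theorem mem_add_two_of_neighborSet_eq (hW : IsC4Witness G W) (hWi : W i = {a})
    (hu : u ∈ W (i + 1)) (hv : v ∈ W (i - 1)) {b : V} (hN : G.neighborSet b = {u, v})
    (hba : b ≠ a) : b ∈ W (i + 2) := by
  obtain ⟨m, hm, -⟩ := hW.1 b
  have hbu : G.Adj b u := (adj_iff_of_neighborSet_eq_pair hN).2 (Or.inl rfl)
  have hbv : G.Adj b v := (adj_iff_of_neighborSet_eq_pair hN).2 (Or.inr rfl)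
  rcases (by decide : ∀ m j : ZMod 4, m = j ∨ m = j + 1 ∨ m = j - 1 ∨ m = j + 2) m i
    with rfl | rfl | rfl | rfl
  · exact absurd (by rwa [hWi, Set.mem_singleton_iff] at hm) hba
  · refine absurd hbv (hW.not_adj_of_mem_add_two hm ?_)
    rwa [(by decide : ∀ j : ZMod 4, j + 1 + 2 = j - 1) i]
  · refine absurd hbu (hW.not_adj_of_mem_add_two hm ?_)
    rwa [(by decide : ∀ j : ZMod 4, j - 1 + 2 = j + 1) i]
  · exact hm

theorem ne_singleton_of_neighborSet_eq (hW : IsC4Witness G W) {a b c : V} (hab : a ≠ b)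
    (hac : a ≠ c) (hbc : b ≠ c) (hNa : G.neighborSet a = {u, v})
    (hNb : G.neighborSet b = {u, v}) (hNc : G.neighborSet c = {u, v}) (i : ZMod 4) :
    W i ≠ {a} := by
  intro hWi
  wlog huv : u ∈ W (i + 1) ∧ v ∈ W (i - 1) generalizing u v
  · rw [Set.pair_comm] at hNa hNb hNc
    exact this hNa hNb hNc ((hW.mem_add_one_sub_one_of_eq_singleton hWi hNa).resolve_right huv)
  have hb := hW.mem_add_two_of_neighborSet_eq hWi huv.1 huv.2 hNb hab.symm
  have hc := hW.mem_add_two_of_neighborSet_eq hWi huv.1 huv.2 hNc hac.symm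
  obtain ⟨w, hw, hbw⟩ := hW.exists_adj_mem_of_mem_of_ne hb hc hbc
  rcases (adj_iff_of_neighborSet_eq_pair hNb).1 hbw with rfl | rfl
  · exact (by decide : ∀ j : ZMod 4, j + 1 ≠ j + 2) i (hW.eq_of_mem huv.1 hw)
  · exact (by decide : ∀ j : ZMod 4, j - 1 ≠ j + 2) i (hW.eq_of_mem huv.2 hw)

end IsC4Witness

theorem c4_witness_three_common_neighbors_not_singleton_general {V : Type*}
    (G : SimpleGraph V) (W : ZMod 4 → Set V) (hW : IsC4Witness G W)
    (u v d₁ d₂ d₃ : V)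
    (hd : d₁ ≠ d₂ ∧ d₁ ≠ d₃ ∧ d₂ ≠ d₃)
    (hN₁ : G.neighborSet d₁ = {u, v}) (hN₂ : G.neighborSet d₂ = {u, v})
    (hN₃ : G.neighborSet d₃ = {u, v}) :
    ∀ k ∈ ({d₁, d₂, d₃} : Set V), ∀ i : ZMod 4, W i ≠ {k} := by
  obtain ⟨h₁₂, h₁₃, h₂₃⟩ := hd
  rintro k (rfl | rfl | rfl)
  · exact hW.ne_singleton_of_neighborSet_eq h₁₂ h₁₃ h₂₃ hN₁ hN₂ hN₃
  · exact hW.ne_singleton_of_neighborSet_eq h₁₂.symm h₂₃ h₁₃ hN₂ hN₁ hN₃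
  · exact hW.ne_singleton_of_neighborSet_eq h₁₃.symm h₂₃.symm h₁₂ hN₃ hN₁ hN₂

theorem c4_witness_three_common_neighbors_not_singleton {V : Type*}
    (G : SimpleGraph V) (W : ZMod 4 → Set V) (hW : IsC4Witness G W)
    (u v d₁ d₂ d₃ : V)
    (hd : d₁ ≠ d₂ ∧ d₁ ≠ d₃ ∧ d₂ ≠ d₃)
    (hnadj : ¬ G.Adj d₁ d₂ ∧ ¬ G.Adj d₁ d₃ ∧ ¬ G.Adj d₂ d₃)
    (hN₁ : G.neighborSet d₁ = {u, v}) (hN₂ : G.neighborSet d₂ = {u, v})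
    (hN₃ : G.neighborSet d₃ = {u, v}) :
    ∀ k ∈ ({d₁, d₂, d₃} : Set V), ∀ i : ZMod 4, W i ≠ {k} :=
  c4_witness_three_common_neighbors_not_singleton_general G W hW u v d₁ d₂ d₃ hd hN₁ hN₂ hN₃
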